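/- Let A ≠ 0 be a non-negative operator in the Krein space K, let K be indefinite, and assume that the range of A is indefinite. Then W_co(A) \ {ν₋, ν₊} = (ν₋, ν₊) (the open interval from ν₋ to ν₊). -/

import Mathlib

open Set Filter Topology

variable {K : Type*} [NormedAddCommGroup K] [InnerProductSpace ℂ K] [CompleteSpace K]

/-- The real part of the Krein space inner product `[x, y] = ⟪J x, y⟫`. -/
noncomputable def kreinRe (J : K →L[ℂ] K) (x y : K) : ℝ :=
  (@inner ℂ K _ (J x) y).re

/-- `J` is a fundamental symmetry: selfadjoint and an involution. -/
def IsFundamentalSymmetry (J : K →L[ℂ] K) : Prop :=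
  IsSelfAdjoint J ∧ J ∘L J = 1

/-- `A` is a non-negative operator in the Krein space `(K, [·,·])` induced by `J`:
`J ∘ A` is selfadjoint on the Hilbert space `K` and `[A x, x] ≥ 0` for all `x`. -/
def IsKreinNonneg (J A : K →L[ℂ] K) : Prop :=
  IsSelfAdjoint (J ∘L A) ∧ ∀ x : K, 0 ≤ kreinRe J (A x) x

/-- The Krein space numerical range `W(A)`. -/
noncomputable def kreinW (J A : K →L[ℂ] K) : Set ℝ :=
  {r : ℝ | ∃ x : K, kreinRe J x x ≠ 0 ∧ r = kreinRe J (A x) x / kreinRe J x x}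

/-- The Krein space co-numerical range `W_co(A)`. -/
noncomputable def kreinWco (J A : K →L[ℂ] K) : Set ℝ :=
  {r : ℝ | ∃ x : K, kreinRe J (A x) x ≠ 0 ∧
    r = kreinRe J (A x) (A x) / kreinRe J (A x) x}

/-- The real spectrum `σℝ(A)` of `A`. -/
def sigmaR (A : K →L[ℂ] K) : Set ℝ := {t : ℝ | (t : ℂ) ∈ spectrum ℂ A}

/-- The Krein space `(K, [·,·])` is indefinite. -/
def KreinIndefinite (J : K →L[ℂ] K) : Prop :=
  (∃ x : K, 0 < kreinRe J x x) ∧ ∃ y : K, kreinRe J y y < 0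

/-!
Put `T = J A ≥ 0`, `S = √T` and `B = S J S`. Then `A = J S²`, `[A x, x] = ‖S x‖²` and
`[A x, A x] = ⟪B S x, S x⟫`, so `W_co(A)` is the set of Rayleigh quotients of the selfadjoint
operator `B` on `ran S \ {0}`; and `A = (J S) S`, `B = S (J S)` share their nonzero spectrum, so
`ν₋, ν₊` are the extreme negative and positive spectral values of `B`. As the quadratic form of `B`
is bounded by its spectrum, `W_co(A) ⊆ [ν₋, ν₊]`. Conversely, let `ν₋ < r < ν₊`. The form
`⟪B z, z⟫ - r ‖z‖²` is positive somewhere on `ran S`: for `r < 0` at `S x` with `A x` a nonzero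
non-negative vector of `ran A`; for `r ≥ 0` because `B` has spectrum above `r`, after projecting
onto `closure (ran S) = (ker S)ᗮ`, which keeps `⟪B z, z⟫` and shortens `z`. Symmetrically it is
negative somewhere on `ran S`, and being homogeneous it vanishes at a nonzero point of the segment
joining the two vectors.
-/

open ContinuousLinearMap

namespace ContinuousLinearMap

section

variable {𝕜 E : Type*} [RCLike 𝕜] [NormedAddCommGroup E] [InnerProductSpace 𝕜 E]

theorem reApplyInnerSelf_sub (T U : E →L[𝕜] E) (x : E) :
    (T - U).reApplyInnerSelf x = T.reApplyInnerSelf x - U.reApplyInnerSelf x := by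
  simp only [reApplyInnerSelf_apply, sub_apply, inner_sub_left, map_sub]

end

variable {E : Type*} [NormedAddCommGroup E] [InnerProductSpace ℂ E]

theorem reApplyInnerSelf_algebraMap (t : ℝ) (x : E) :
    (algebraMap ℝ (E →L[ℂ] E) t).reApplyInnerSelf x = t * ‖x‖ ^ 2 := by
  rw [reApplyInnerSelf_apply, ContinuousLinearMap.algebraMap_apply,
    RCLike.real_smul_eq_coe_smul (K := ℂ), inner_smul_real_left, RCLike.smul_re,
    inner_self_eq_norm_sq]

theorem reApplyInnerSelf_real_smul (T : E →L[ℂ] E) (a : ℝ) (x : E) :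
    T.reApplyInnerSelf (a • x) = a ^ 2 * T.reApplyInnerSelf x := by
  rw [← Complex.coe_smul, reApplyInnerSelf_smul, Complex.norm_real, Real.norm_eq_abs, sq_abs]

end ContinuousLinearMap

theorem exists_ne_zero_eq_zero_of_sq_homogeneous {E : Type*} [AddCommGroup E] [Module ℝ E]
    [TopologicalSpace E] [ContinuousAdd E] [ContinuousSMul ℝ E] {g : E → ℝ} (hg : Continuous g)
    (hsmul : ∀ (a : ℝ) (z : E), g (a • z) = a ^ 2 * g z) {z₁ z₂ : E} (h₁ : g z₁ < 0)
    (h₂ : 0 < g z₂) : ∃ a b : ℝ, a • z₁ + b • z₂ ≠ 0 ∧ g (a • z₁ + b • z₂) = 0 := by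
  have hg0 : g 0 = 0 := by simpa using hsmul 0 0
  obtain ⟨s, -, hs⟩ := intermediate_value_Icc (zero_le_one' ℝ)
    (f := fun s : ℝ ↦ g ((1 - s) • z₁ + s • z₂)) (by fun_prop)
    (show (0 : ℝ) ∈ Icc _ _ by simpa using ⟨h₁.le, h₂.le⟩)
  refine ⟨1 - s, s, fun h0 ↦ ?_, hs⟩
  -- if the segment passed through `0`, then `z₂` would be a multiple of `z₁`, so `g z₂ ≤ 0`
  have hs0 : s ≠ 0 := by
    rintro rfl
    simp only [sub_zero, one_smul, zero_smul, add_zero] at h0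
    exact h₁.ne (h0 ▸ hg0)
  have hsz₂ : s • z₂ = (-(1 - s)) • z₁ := by
    rw [neg_smul, eq_neg_iff_add_eq_zero, add_comm, h0]
  have hz₂ : z₂ = (-(1 - s) / s) • z₁ := by
    rw [← inv_smul_smul₀ hs0 z₂, hsz₂, smul_smul, div_eq_inv_mul]
  have : g z₂ ≤ 0 := by
    rw [hz₂, hsmul]
    exact mul_nonpos_of_nonneg_of_nonpos (sq_nonneg _) h₁.le
  linarith

theorem subset_Icc_sInf_Iio_sSup_Ioi {s : Set ℝ} (hs : Bornology.IsBounded s) :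
    s ⊆ Icc (sInf (s ∩ Iio 0)) (sSup (s ∩ Ioi 0)) := by
  intro l hl
  constructor
  · rcases lt_or_ge l 0 with hneg | hnonneg
    · exact csInf_le (hs.bddBelow.mono inter_subset_left) ⟨hl, hneg⟩
    · exact (Real.sInf_nonpos fun _ hx ↦ hx.2.le).trans hnonneg
  · rcases le_or_gt l 0 with hnonpos | hpos
    · exact hnonpos.trans (Real.sSup_nonneg fun _ hx ↦ hx.2.le)
    · exact le_csSup (hs.bddAbove.mono inter_subset_left) ⟨hl, hpos⟩

namespace IsSelfAdjoint

section SpectralBounds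

variable {B : K →L[ℂ] K}

theorem forall_reApplyInnerSelf_le_iff (hB : IsSelfAdjoint B) (t : ℝ) :
    (∀ x, B.reApplyInnerSelf x ≤ t * ‖x‖ ^ 2) ↔ ∀ l ∈ spectrum ℝ B, l ≤ t := by
  rw [← le_algebraMap_iff_spectrum_le hB, ContinuousLinearMap.le_def, isPositive_def']
  simp only [reApplyInnerSelf_sub, reApplyInnerSelf_algebraMap, sub_nonneg]
  exact (and_iff_right ((IsSelfAdjoint.algebraMap _ (.all t)).sub hB)).symm

theorem forall_le_reApplyInnerSelf_iff (hB : IsSelfAdjoint B) (t : ℝ) :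
    (∀ x, t * ‖x‖ ^ 2 ≤ B.reApplyInnerSelf x) ↔ ∀ l ∈ spectrum ℝ B, t ≤ l := by
  rw [← algebraMap_le_iff_le_spectrum hB, ContinuousLinearMap.le_def, isPositive_def']
  simp only [reApplyInnerSelf_sub, reApplyInnerSelf_algebraMap, sub_nonneg]
  exact (and_iff_right (hB.sub (IsSelfAdjoint.algebraMap _ (.all t)))).symm

theorem rayleighQuotient_mem_Icc (hB : IsSelfAdjoint B) (x : K) :
    B.rayleighQuotient x ∈ Icc (sInf (spectrum ℝ B ∩ Iio 0)) (sSup (spectrum ℝ B ∩ Ioi 0)) := by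
  have hσ := subset_Icc_sInf_Iio_sSup_Ioi (spectrum.isBounded B)
  rcases eq_or_ne x 0 with rfl | hx
  · rw [rayleighQuotient_apply_zero]
    exact ⟨Real.sInf_nonpos fun _ h ↦ h.2.le, Real.sSup_nonneg fun _ h ↦ h.2.le⟩
  have hx2 : 0 < ‖x‖ ^ 2 := by positivity
  exact ⟨(le_div_iff₀ hx2).mpr ((hB.forall_le_reApplyInnerSelf_iff _).mpr (fun l hl ↦ (hσ hl).1) x),
    (div_le_iff₀ hx2).mpr ((hB.forall_reApplyInnerSelf_le_iff _).mpr (fun l hl ↦ (hσ hl).2) x)⟩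

end SpectralBounds

section Compression

variable {S C : K →L[ℂ] K}

variable (C) in
theorem reApplyInnerSelf_mul_mul_self (hS : IsSelfAdjoint S) (z : K) :
    (S * C * S).reApplyInnerSelf z = C.reApplyInnerSelf (S z) :=
  congrArg RCLike.re (hS.isSymmetric (C (S z)) z)

variable (C) in
theorem exists_mem_range_lt_reApplyInnerSelf (hS : IsSelfAdjoint S) {t : ℝ} (ht : 0 ≤ t) {y : K}
    (hy : t * ‖y‖ ^ 2 < (S * C * S).reApplyInnerSelf y) :
    ∃ z ∈ range S, t * ‖z‖ ^ 2 < (S * C * S).reApplyInnerSelf z := by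
  set M := S.range.topologicalClosure
  set y' := M.starProjection y
  have hy' : y' ∈ closure (range S) := by
    change y' ∈ closure (S.range : Set K)
    rw [← Submodule.topologicalClosure_coe]
    exact M.starProjection_apply_mem y
  have hSy : S y' = S y := by
    have h := M.sub_starProjection_mem_orthogonal y
    rw [Submodule.orthogonal_closure, hS.isStarNormal.orthogonal_range] at h
    rw [eq_comm, ← sub_eq_zero, ← map_sub]
    exact h
  have hlt : t * ‖y'‖ ^ 2 < (S * C * S).reApplyInnerSelf y' := calc
    t * ‖y'‖ ^ 2 ≤ t * ‖y‖ ^ 2 := by gcongr; exact M.norm_starProjection_apply_le y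
    _ < (S * C * S).reApplyInnerSelf y := hy
    _ = (S * C * S).reApplyInnerSelf y' := by
      rw [hS.reApplyInnerSelf_mul_mul_self, hS.reApplyInnerSelf_mul_mul_self, hSy]
  have hopen : IsOpen {z : K | t * ‖z‖ ^ 2 < (S * C * S).reApplyInnerSelf z} :=
    isOpen_lt (by fun_prop) (reApplyInnerSelf_continuous _)
  obtain ⟨z, hz, hzS⟩ := mem_closure_iff.mp hy' _ hopen hlt
  exact ⟨z, hzS, hz⟩

theorem exists_mem_range_lt_reApplyInnerSelf_of_lt_sSup (hS : IsSelfAdjoint S)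
    (hC : IsSelfAdjoint C) (hv : ∃ v ∈ range S, v ≠ 0 ∧ 0 ≤ (S * C * S).reApplyInnerSelf v)
    {r : ℝ} (hr : r < sSup (spectrum ℝ (S * C * S) ∩ Ioi 0)) :
    ∃ z ∈ range S, r * ‖z‖ ^ 2 < (S * C * S).reApplyInnerSelf z := by
  rcases lt_or_ge r 0 with hr0 | hr0
  · obtain ⟨v, hvS, hv0, hvC⟩ := hv
    exact ⟨v, hvS, (mul_neg_of_neg_of_pos hr0 (by positivity)).trans_le hvC⟩
  have hne : (spectrum ℝ (S * C * S) ∩ Ioi 0).Nonempty := by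
    by_contra h
    rw [not_nonempty_iff_eq_empty.mp h, Real.sSup_empty] at hr
    linarith
  obtain ⟨l, ⟨hl, -⟩, hrl⟩ := exists_lt_of_lt_csSup hne hr
  obtain ⟨y, hy⟩ : ∃ y, r * ‖y‖ ^ 2 < (S * C * S).reApplyInnerSelf y := by
    by_contra! h
    exact hrl.not_ge (((hC.conjugate_self hS).forall_reApplyInnerSelf_le_iff r).mp h l hl)
  exact hS.exists_mem_range_lt_reApplyInnerSelf C hr0 hy

theorem exists_mem_range_reApplyInnerSelf_lt_of_sInf_lt (hS : IsSelfAdjoint S)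
    (hC : IsSelfAdjoint C) (hu : ∃ u ∈ range S, u ≠ 0 ∧ (S * C * S).reApplyInnerSelf u ≤ 0)
    {r : ℝ} (hr : sInf (spectrum ℝ (S * C * S) ∩ Iio 0) < r) :
    ∃ z ∈ range S, (S * C * S).reApplyInnerSelf z < r * ‖z‖ ^ 2 := by
  rcases lt_or_ge 0 r with hr0 | hr0
  · obtain ⟨u, huS, hu0, huC⟩ := hu
    exact ⟨u, huS, huC.trans_lt (by positivity)⟩
  have hne : (spectrum ℝ (S * C * S) ∩ Iio 0).Nonempty := by
    by_contra h
    rw [not_nonempty_iff_eq_empty.mp h, Real.sInf_empty] at hr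
    linarith
  obtain ⟨l, ⟨hl, -⟩, hlr⟩ := exists_lt_of_csInf_lt hne hr
  obtain ⟨y, hy⟩ : ∃ y, (S * C * S).reApplyInnerSelf y < r * ‖y‖ ^ 2 := by
    by_contra! h
    exact hlr.not_ge (((hC.conjugate_self hS).forall_le_reApplyInnerSelf_iff r).mp h l hl)
  have hneg : ∀ z, (S * -C * S).reApplyInnerSelf z = -(S * C * S).reApplyInnerSelf z := by
    simp [reApplyInnerSelf_apply]
  obtain ⟨z, hzS, hz⟩ := hS.exists_mem_range_lt_reApplyInnerSelf (-C) (neg_nonneg.mpr hr0)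
    (y := y) (by rw [hneg]; linarith)
  exact ⟨z, hzS, by rw [hneg] at hz; linarith⟩

theorem rayleighQuotient_image_range_diff (hS : IsSelfAdjoint S) (hC : IsSelfAdjoint C)
    (hu : ∃ u ∈ range S, u ≠ 0 ∧ (S * C * S).reApplyInnerSelf u ≤ 0)
    (hv : ∃ v ∈ range S, v ≠ 0 ∧ 0 ≤ (S * C * S).reApplyInnerSelf v) :
    (S * C * S).rayleighQuotient '' (range S \ {0}) \
        {sInf (spectrum ℝ (S * C * S) ∩ Iio 0), sSup (spectrum ℝ (S * C * S) ∩ Ioi 0)} =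
      Ioo (sInf (spectrum ℝ (S * C * S) ∩ Iio 0)) (sSup (spectrum ℝ (S * C * S) ∩ Ioi 0)) := by
  ext r
  simp only [Set.mem_sdiff, mem_insert_iff, mem_singleton_iff, not_or, mem_Ioo]
  constructor
  · rintro ⟨⟨z, -, rfl⟩, hm, hM⟩
    obtain ⟨hmz, hzM⟩ := (hC.conjugate_self hS).rayleighQuotient_mem_Icc z
    exact ⟨lt_of_le_of_ne hmz (Ne.symm hm), lt_of_le_of_ne hzM hM⟩
  rintro ⟨hm, hM⟩
  obtain ⟨z₁, ⟨x₁, rfl⟩, h₁⟩ := hS.exists_mem_range_reApplyInnerSelf_lt_of_sInf_lt hC hu hm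
  obtain ⟨z₂, ⟨x₂, rfl⟩, h₂⟩ := hS.exists_mem_range_lt_reApplyInnerSelf_of_lt_sSup hC hv hM
  obtain ⟨a, b, hne, h0⟩ := exists_ne_zero_eq_zero_of_sq_homogeneous
    (g := fun z ↦ (S * C * S).reApplyInnerSelf z - r * ‖z‖ ^ 2)
    ((reApplyInnerSelf_continuous _).sub (by fun_prop))
    (fun a z ↦ by
      simp only [reApplyInnerSelf_real_smul, norm_smul, Real.norm_eq_abs, mul_pow, sq_abs]
      ring)
    (z₁ := S x₁) (by linarith) (by linarith)
  refine ⟨⟨a • S x₁ + b • S x₂, ⟨⟨a • x₁ + b • x₂, by simp⟩, hne⟩, ?_⟩, hm.ne', hM.ne⟩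
  rw [rayleighQuotient, sub_eq_zero.mp h0, mul_div_assoc, div_self (by positivity), mul_one]

end Compression

end IsSelfAdjoint

theorem eq_mul_mul_of_mul_self_eq {M : Type*} [Monoid M] {J A S : M} (hJJ : J * J = 1)
    (hSS : S * S = J * A) : A = J * S * S := by
  rw [mul_assoc, hSS, ← mul_assoc, hJJ, one_mul]

omit [CompleteSpace K] in
theorem sigmaR_eq_spectrum (A : K →L[ℂ] K) : sigmaR A = spectrum ℝ A :=
  Set.ext fun t ↦ spectrum.algebraMap_mem_iff ℂ (a := A) (r := t)

theorem IsKreinNonneg.comp_nonneg {J A : K →L[ℂ] K} (hA : IsKreinNonneg J A) : 0 ≤ J ∘L A := by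
  rw [nonneg_iff_isPositive, isPositive_def']
  exact ⟨hA.1, hA.2⟩

section KreinReduction

variable {J A S : K →L[ℂ] K}

theorem kreinRe_apply_self_eq_norm_sq (hS : IsSelfAdjoint S) (hSS : S * S = J ∘L A) (x : K) :
    kreinRe J (A x) x = ‖S x‖ ^ 2 := by
  rw [kreinRe, ← comp_apply, ← hSS, ← inner_self_eq_norm_sq (𝕜 := ℂ) (S x)]
  exact congrArg RCLike.re (hS.isSymmetric (S x) x)

theorem kreinRe_apply_apply_eq (hJJ : J ∘L J = 1) (hS : IsSelfAdjoint S) (hSS : S * S = J ∘L A)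
    (x : K) : kreinRe J (A x) (A x) = (S * J * S).reApplyInnerSelf (S x) := by
  rw [hS.reApplyInnerSelf_mul_mul_self, reApplyInnerSelf_apply, kreinRe, ← comp_apply, ← hSS,
    eq_mul_mul_of_mul_self_eq hJJ hSS]
  exact inner_re_symm (𝕜 := ℂ) _ _

omit [CompleteSpace K] in
theorem sigmaR_inter_eq (hJJ : J ∘L J = 1) (hSS : S * S = J ∘L A) {I : Set ℝ} (hI : 0 ∉ I) :
    sigmaR A ∩ I = spectrum ℝ (S * J * S) ∩ I := by
  have h := spectrum.nonzero_mul_comm (𝕜 := ℝ) (J * S) S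
  rw [← eq_mul_mul_of_mul_self_eq hJJ hSS, ← mul_assoc] at h
  ext l
  by_cases hl : l ∈ I
  · have := congrArg (l ∈ ·) h
    simpa [sigmaR_eq_spectrum, hl, ne_of_mem_of_not_mem hl hI] using this
  · simp [hl]

theorem kreinWco_eq_image_rayleighQuotient (hJJ : J ∘L J = 1) (hS : IsSelfAdjoint S)
    (hSS : S * S = J ∘L A) :
    kreinWco J A = (S * J * S).rayleighQuotient '' (range S \ {0}) := by
  ext r
  simp only [kreinWco, kreinRe_apply_self_eq_norm_sq hS hSS, kreinRe_apply_apply_eq hJJ hS hSS]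
  constructor
  · rintro ⟨x, hx, rfl⟩
    exact ⟨S x, ⟨⟨x, rfl⟩, by simpa using hx⟩, rfl⟩
  · rintro ⟨_, ⟨⟨x, rfl⟩, hx⟩, rfl⟩
    exact ⟨x, by simpa using hx, rfl⟩

theorem exists_mem_range_reApplyInnerSelf_of_kreinRe (hJJ : J ∘L J = 1) (hS : IsSelfAdjoint S)
    (hSS : S * S = J ∘L A) {p : ℝ → Prop} (h : ∃ u ∈ range A, u ≠ 0 ∧ p (kreinRe J u u)) :
    ∃ z ∈ range S, z ≠ 0 ∧ p ((S * J * S).reApplyInnerSelf z) := by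
  obtain ⟨_, ⟨x, rfl⟩, hx0, hp⟩ := h
  refine ⟨S x, ⟨x, rfl⟩, fun h0 ↦ hx0 ?_, by rwa [← kreinRe_apply_apply_eq hJJ hS hSS]⟩
  rw [eq_mul_mul_of_mul_self_eq hJJ hSS, mul_apply_eq_comp, mul_apply_eq_comp, h0, map_zero,
    map_zero]

end KreinReduction

-- `sInf ∅ = sSup ∅ = 0` in `ℝ` realises the convention `ν₋ = 0`, `ν₊ = 0` for an empty
-- negative or positive real spectrum.
theorem stmt_15_general (J A : K →L[ℂ] K) (hJ : IsFundamentalSymmetry J)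
    (hA : IsKreinNonneg J A)
    (hran : (∃ u ∈ Set.range (A : K → K), u ≠ 0 ∧ kreinRe J u u ≤ 0) ∧
      (∃ v ∈ Set.range (A : K → K), v ≠ 0 ∧ 0 ≤ kreinRe J v v)) :
    kreinWco J A \ {sInf (sigmaR A ∩ Set.Iio 0), sSup (sigmaR A ∩ Set.Ioi 0)} =
      Set.Ioo (sInf (sigmaR A ∩ Set.Iio 0)) (sSup (sigmaR A ∩ Set.Ioi 0)) := by
  obtain ⟨hJ, hJJ⟩ := hJ
  set S := CFC.sqrt (J ∘L A)
  have hS : IsSelfAdjoint S := (CFC.sqrt_nonneg _).isSelfAdjoint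
  have hSS : S * S = J ∘L A := CFC.sqrt_mul_sqrt_self _ hA.comp_nonneg
  rw [kreinWco_eq_image_rayleighQuotient hJJ hS hSS, sigmaR_inter_eq hJJ hSS self_notMem_Iio,
    sigmaR_inter_eq hJJ hSS self_notMem_Ioi]
  exact hS.rayleighQuotient_image_range_diff hJ
    (exists_mem_range_reApplyInnerSelf_of_kreinRe hJJ hS hSS (p := (· ≤ 0)) hran.1)
    (exists_mem_range_reApplyInnerSelf_of_kreinRe hJJ hS hSS (p := (0 ≤ ·)) hran.2)

/-- Theorem (iii) on the co-numerical range: if `ran A` is indefinite, then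
`W_co(A) \ {ν₋, ν₊} = (ν₋, ν₊)`.  (Here `sInf ∅ = sSup ∅ = 0` in `ℝ`, matching the
convention `ν₋ = 0`, `ν₊ = 0` for empty negative/positive spectrum.) -/
theorem stmt_15 (J A : K →L[ℂ] K) (hJ : IsFundamentalSymmetry J)
    (hA : IsKreinNonneg J A) (hA0 : A ≠ 0) (hind : KreinIndefinite J)
    (hran : (∃ u ∈ Set.range (A : K → K), u ≠ 0 ∧ kreinRe J u u ≤ 0) ∧
      (∃ v ∈ Set.range (A : K → K), v ≠ 0 ∧ 0 ≤ kreinRe J v v)) :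
    kreinWco J A \ {sInf (sigmaR A ∩ Set.Iio 0), sSup (sigmaR A ∩ Set.Ioi 0)} =
      Set.Ioo (sInf (sigmaR A ∩ Set.Iio 0)) (sSup (sigmaR A ∩ Set.Ioi 0)) :=
  stmt_15_general J A hJ hA hran
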